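/- Let A = UΣVᵀ be the SVD of A ∈ ℝ^{m×n}, partitioned so that Σ = diag(Σ₁, Σ₂) with Σ₁ ∈ ℝ^{k×k} and V = [V₁, V₂] conformally. Let Ω ∈ ℝ^{n×r}, set Ω₁ = V₁ᵀΩ and Ω₂ = V₂ᵀΩ, and assume Ω₁ has full row rank. Then for the orthogonal projector P_{AΩ} onto range(AΩ), ‖(I − P_{AΩ})A‖² ≤ ‖Σ₂‖² + ‖Σ₂ Ω₂ Ω₁⁺‖², in the Frobenius norm (and also in the spectral norm). -/

import Mathlib

/-!
Let `P = Y G Yᵀ` with `Y = AΩ` and `G` the pseudoinverse of the Gram matrix `YᵀY`; it is the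
orthogonal projector onto the range of `Y`. Since `(1 - P) Y = 0`, we have
`(1 - P) A = (1 - P) (A - Y X)` for every `X`, and the choice `X = Ω₁⁺ V₁ᵀ` together with
`Ω₁ Ω₁⁺ = 1` gives `A - Y X = U [[0, 0], [-Σ₂Ω₂Ω₁⁺, Σ₂]] Vᵀ`. The factors `1 - P`, `U` and `Vᵀ`
are spectral contractions, so both norms of the error are bounded by those of the block matrix,
whose squared Frobenius norm is the sum over the blocks and whose squared spectral norm is at
most that sum by the C⋆-identity.
-/

open Matrix

/-- The four Penrose conditions: `Ap` is the Moore–Penrose pseudoinverse of `A`. -/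
def IsMoorePenrose {m n : Type*} [Fintype m] [Fintype n]
    (A : Matrix m n ℝ) (Ap : Matrix n m ℝ) : Prop :=
  A * Ap * A = A ∧ Ap * A * Ap = Ap ∧ (A * Ap)ᵀ = A * Ap ∧ (Ap * A)ᵀ = Ap * A

/-- Spectral (operator) norm of a real matrix, induced by the Euclidean norms. -/
noncomputable def specNorm {m n : Type*} [Fintype m] [Fintype n] [DecidableEq n]
    (A : Matrix m n ℝ) : ℝ :=
  ‖LinearMap.toContinuousLinearMap (Matrix.toEuclideanLin A)‖

/-- Frobenius norm of a real matrix. -/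
noncomputable def frobNorm {m n : Type*} [Fintype m] [Fintype n]
    (A : Matrix m n ℝ) : ℝ :=
  Real.sqrt (∑ i, ∑ j, (A i j) ^ 2)

open scoped Matrix.Norms.L2Operator

section SpectralNorm

variable {l m n : Type*} [Fintype l] [Fintype m] [Fintype n]

lemma specNorm_eq_l2_opNorm [DecidableEq n] (A : Matrix m n ℝ) : specNorm A = ‖A‖ := rfl

lemma specNorm_nonneg [DecidableEq n] (A : Matrix m n ℝ) : 0 ≤ specNorm A := norm_nonneg _

lemma specNorm_neg [DecidableEq n] (A : Matrix m n ℝ) : specNorm (-A) = specNorm A :=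
  norm_neg A

lemma specNorm_mul_le [DecidableEq n] [DecidableEq l] (A : Matrix m n ℝ) (B : Matrix n l ℝ) :
    specNorm (A * B) ≤ specNorm A * specNorm B :=
  l2_opNorm_mul A B

lemma specNorm_transpose [DecidableEq m] [DecidableEq n] (A : Matrix m n ℝ) :
    specNorm Aᵀ = specNorm A := by
  simpa [specNorm_eq_l2_opNorm] using l2_opNorm_conjTranspose A

lemma specNorm_transpose_mul_self [DecidableEq n] (A : Matrix m n ℝ) :
    specNorm (Aᵀ * A) = specNorm A ^ 2 := by
  simpa [specNorm_eq_l2_opNorm, sq] using l2_opNorm_conjTranspose_mul_self A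

lemma specNorm_one_le [DecidableEq n] : specNorm (1 : Matrix n n ℝ) ≤ 1 := by
  unfold specNorm
  simp only [toLpLin_one]
  exact ContinuousLinearMap.norm_id_le

lemma specNorm_le_one_of_transpose_mul_self_eq_one [DecidableEq n] {U : Matrix m n ℝ}
    (hU : Uᵀ * U = 1) : specNorm U ≤ 1 := by
  have h : specNorm U ^ 2 ≤ 1 := by
    rw [← specNorm_transpose_mul_self, hU]
    exact specNorm_one_le
  nlinarith [specNorm_nonneg U]

lemma specNorm_le_one_of_symm_of_idempotent [DecidableEq n] {R : Matrix n n ℝ}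
    (hsymm : Rᵀ = R) (hidem : R * R = R) : specNorm R ≤ 1 := by
  have h : specNorm R ^ 2 = specNorm R := by
    rw [← specNorm_transpose_mul_self, hsymm, hidem]
  nlinarith [specNorm_nonneg R]

lemma specNorm_mul_mul_le_of_le_one [DecidableEq m] [DecidableEq n]
    {P : Matrix l m ℝ} {Q : Matrix n n ℝ} (hP : specNorm P ≤ 1) (hQ : specNorm Q ≤ 1)
    (M : Matrix m n ℝ) : specNorm (P * M * Q) ≤ specNorm M :=
  calc specNorm (P * M * Q) ≤ specNorm (P * M) * specNorm Q := specNorm_mul_le _ _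
    _ ≤ specNorm (P * M) := mul_le_of_le_one_right (specNorm_nonneg _) hQ
    _ ≤ specNorm P * specNorm M := specNorm_mul_le _ _
    _ ≤ specNorm M := mul_le_of_le_one_left (specNorm_nonneg _) hP

/-- The C⋆-identity turns the norm of a stacked matrix into the norm of a sum of Gram matrices. -/
lemma specNorm_fromRows_sq_le {m₁ m₂ : Type*} [Fintype m₁] [Fintype m₂] [DecidableEq n]
    (A₁ : Matrix m₁ n ℝ) (A₂ : Matrix m₂ n ℝ) :
    specNorm (fromRows A₁ A₂) ^ 2 ≤ specNorm A₁ ^ 2 + specNorm A₂ ^ 2 := by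
  simp only [← specNorm_transpose_mul_self, transpose_fromRows, fromCols_mul_fromRows]
  exact norm_add_le (A₁ᵀ * A₁) (A₂ᵀ * A₂)

lemma specNorm_fromBlocks_zero_zero_sq_le {m₁ m₂ n₁ n₂ : Type*} [Fintype m₁] [Fintype m₂]
    [Fintype n₁] [Fintype n₂] [DecidableEq m₂] [DecidableEq n₁] [DecidableEq n₂]
    (C : Matrix m₂ n₁ ℝ) (D : Matrix m₂ n₂ ℝ) :
    specNorm (fromBlocks (0 : Matrix m₁ n₁ ℝ) 0 C D) ^ 2 ≤ specNorm C ^ 2 + specNorm D ^ 2 :=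
  calc specNorm (fromBlocks (0 : Matrix m₁ n₁ ℝ) 0 C D) ^ 2
      = specNorm (fromRows (0 : Matrix m₁ (n₁ ⊕ n₂) ℝ) (fromCols C D)) ^ 2 := by
        rw [← fromRows_fromCols_eq_fromBlocks, fromCols_zero]
    _ ≤ specNorm (0 : Matrix m₁ (n₁ ⊕ n₂) ℝ) ^ 2 + specNorm (fromCols C D) ^ 2 :=
        specNorm_fromRows_sq_le _ _
    _ = specNorm (fromRows Cᵀ Dᵀ) ^ 2 := by
        rw [← transpose_fromCols, specNorm_transpose, specNorm_eq_l2_opNorm 0, norm_zero]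
        ring
    _ ≤ specNorm C ^ 2 + specNorm D ^ 2 := by
        simpa only [specNorm_transpose] using specNorm_fromRows_sq_le Cᵀ Dᵀ

end SpectralNorm

section FrobeniusNorm

variable {l m n : Type*} [Fintype l] [Fintype m] [Fintype n]

lemma frobNorm_sq (A : Matrix m n ℝ) : frobNorm A ^ 2 = ∑ i, ∑ j, A i j ^ 2 :=
  Real.sq_sqrt (by positivity)

lemma frobNorm_nonneg (A : Matrix m n ℝ) : 0 ≤ frobNorm A := Real.sqrt_nonneg _

lemma frobNorm_neg (A : Matrix m n ℝ) : frobNorm (-A) = frobNorm A := by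
  simp [frobNorm]

lemma frobNorm_transpose (A : Matrix m n ℝ) : frobNorm Aᵀ = frobNorm A := by
  rw [frobNorm, frobNorm, Finset.sum_comm]
  rfl

lemma sum_sq_mulVec_le [DecidableEq n] (A : Matrix m n ℝ) (v : n → ℝ) :
    ∑ i, (A *ᵥ v) i ^ 2 ≤ specNorm A ^ 2 * ∑ j, v j ^ 2 := by
  have h := l2_opNorm_mulVec A ((EuclideanSpace.equiv n ℝ).symm v)
  rw [← specNorm_eq_l2_opNorm] at h
  simpa [mul_pow, EuclideanSpace.real_norm_sq_eq] using pow_le_pow_left₀ (norm_nonneg _) h 2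

lemma frobNorm_mul_le [DecidableEq m] (A : Matrix l m ℝ) (B : Matrix m n ℝ) :
    frobNorm (A * B) ≤ specNorm A * frobNorm B := by
  refine (pow_le_pow_iff_left₀ (frobNorm_nonneg _)
    (mul_nonneg (specNorm_nonneg A) (frobNorm_nonneg B)) two_ne_zero).1 ?_
  calc frobNorm (A * B) ^ 2 = ∑ j, ∑ i, (A *ᵥ Bᵀ j) i ^ 2 := by
        rw [frobNorm_sq, Finset.sum_comm]
        rfl
    _ ≤ ∑ j, specNorm A ^ 2 * ∑ k, Bᵀ j k ^ 2 :=
        Finset.sum_le_sum fun j _ => sum_sq_mulVec_le A (Bᵀ j)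
    _ = (specNorm A * frobNorm B) ^ 2 := by
        rw [← Finset.mul_sum, mul_pow, frobNorm_sq, Finset.sum_comm]
        rfl

lemma frobNorm_mul_mul_le_of_le_one [DecidableEq m] [DecidableEq n]
    {P : Matrix l m ℝ} {Q : Matrix n n ℝ} (hP : specNorm P ≤ 1) (hQ : specNorm Q ≤ 1)
    (M : Matrix m n ℝ) : frobNorm (P * M * Q) ≤ frobNorm M :=
  calc frobNorm (P * M * Q) = frobNorm (P * (Qᵀ * Mᵀ)ᵀ) := by
        rw [transpose_mul, transpose_transpose, transpose_transpose, Matrix.mul_assoc]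
    _ ≤ 1 * (1 * frobNorm Mᵀ) := by
        refine (frobNorm_mul_le P _).trans ?_
        rw [frobNorm_transpose]
        refine mul_le_mul hP ((frobNorm_mul_le _ _).trans ?_) (frobNorm_nonneg _) zero_le_one
        rw [specNorm_transpose]
        exact mul_le_mul_of_nonneg_right hQ (frobNorm_nonneg _)
    _ = frobNorm M := by rw [frobNorm_transpose, one_mul, one_mul]

lemma frobNorm_fromBlocks_zero_zero_sq {m₁ m₂ n₁ n₂ : Type*} [Fintype m₁] [Fintype m₂]
    [Fintype n₁] [Fintype n₂] (C : Matrix m₂ n₁ ℝ) (D : Matrix m₂ n₂ ℝ) :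
    frobNorm (fromBlocks (0 : Matrix m₁ n₁ ℝ) 0 C D) ^ 2 = frobNorm C ^ 2 + frobNorm D ^ 2 := by
  simp [frobNorm_sq, Fintype.sum_sum_type, Finset.sum_add_distrib]

end FrobeniusNorm

namespace IsMoorePenrose

variable {m r : Type*} [Fintype m] [Fintype r] {Y : Matrix m r ℝ} {G : Matrix r r ℝ}

/-- `G * (Yᵀ * Y)` fixes the row space of `Y`: the defect `D` of this identity has `Dᵀ * D = 0`. -/
lemma mul_mul_gram (hG : IsMoorePenrose (Yᵀ * Y) G) : Y * G * (Yᵀ * Y) = Y := by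
  obtain ⟨hGG, -, -, hsymm⟩ := hG
  set E := G * (Yᵀ * Y)
  have hGE : Yᵀ * Y * E = Yᵀ * Y := by rw [← Matrix.mul_assoc]; exact hGG
  have hEG : E * (Yᵀ * Y) = Yᵀ * Y := by
    have h := congrArg transpose hGE
    rwa [transpose_mul, hsymm, transpose_mul, transpose_transpose] at h
  rw [Matrix.mul_assoc, ← sub_eq_zero, ← conjTranspose_mul_self_eq_zero,
    conjTranspose_eq_transpose_of_trivial, transpose_sub, transpose_mul, hsymm,
    Matrix.sub_mul, Matrix.mul_sub, Matrix.mul_sub, Matrix.mul_assoc E, ← Matrix.mul_assoc Yᵀ,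
    hGE, hEG, Matrix.mul_assoc E, hEG, sub_self]

lemma gramProj_mul (hG : IsMoorePenrose (Yᵀ * Y) G) : Y * G * Yᵀ * Y = Y := by
  rw [Matrix.mul_assoc _ Yᵀ, hG.mul_mul_gram]

lemma transpose_gramProj (hG : IsMoorePenrose (Yᵀ * Y) G) :
    (Y * G * Yᵀ)ᵀ = Y * G * Yᵀ := by
  have hYt : Yᵀ * Y * Gᵀ * Yᵀ = Yᵀ := by
    simpa only [transpose_mul, transpose_transpose, Matrix.mul_assoc] using
      congrArg transpose hG.mul_mul_gram
  calc (Y * G * Yᵀ)ᵀ = Y * Gᵀ * Yᵀ := by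
        rw [transpose_mul, transpose_mul, transpose_transpose, Matrix.mul_assoc]
    _ = Y * G * (Yᵀ * Y) * Gᵀ * Yᵀ := by rw [hG.mul_mul_gram]
    _ = Y * G * (Yᵀ * Y * Gᵀ * Yᵀ) := by simp only [Matrix.mul_assoc]
    _ = Y * G * Yᵀ := by rw [hYt]

lemma gramProj_mul_self (hG : IsMoorePenrose (Yᵀ * Y) G) :
    Y * G * Yᵀ * (Y * G * Yᵀ) = Y * G * Yᵀ := by
  rw [← Matrix.mul_assoc (Y * G * Yᵀ) (Y * G) Yᵀ, ← Matrix.mul_assoc (Y * G * Yᵀ) Y G,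
    hG.gramProj_mul]

lemma one_sub_gramProj_mul [DecidableEq m] (hG : IsMoorePenrose (Yᵀ * Y) G) :
    (1 - Y * G * Yᵀ) * Y = 0 := by
  rw [Matrix.sub_mul, Matrix.one_mul, hG.gramProj_mul, sub_self]

lemma specNorm_one_sub_gramProj_le [DecidableEq m] (hG : IsMoorePenrose (Yᵀ * Y) G) :
    specNorm (1 - Y * G * Yᵀ) ≤ 1 :=
  specNorm_le_one_of_symm_of_idempotent
    (by rw [transpose_sub, transpose_one, hG.transpose_gramProj])
    (by rw [Matrix.sub_mul, Matrix.one_mul, Matrix.mul_sub, Matrix.mul_one, hG.gramProj_mul_self,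
      sub_self, sub_zero])

end IsMoorePenrose

lemma fromBlocks_mul_fromRows_sub {R : Type*} [Ring R] {a b c d s r : Type*}
    [Fintype b] [Fintype d] [Fintype s] [Fintype r] [DecidableEq b]
    (S₁ : Matrix a b R) (S₂ : Matrix c d R) (W₁ : Matrix b s R) (W₂ : Matrix d s R)
    (Ω : Matrix s r R) (Ωp : Matrix r b R) (h : W₁ * Ω * Ωp = 1) :
    fromBlocks S₁ 0 0 S₂ * fromRows W₁ W₂ - fromBlocks S₁ 0 0 S₂ * (fromRows W₁ W₂ * Ω) * Ωp * W₁
      = fromBlocks 0 0 (-(S₂ * (W₂ * Ω) * Ωp)) S₂ * fromRows W₁ W₂ := by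
  have h₁ : S₁ * (W₁ * Ω) * Ωp * W₁ = S₁ * W₁ := by
    rw [Matrix.mul_assoc S₁, Matrix.mul_assoc S₁, h, Matrix.one_mul]
  simp only [fromRows_mul, fromBlocks_mul_fromRows, Matrix.zero_mul, add_zero, zero_add]
  ext (i | i) j <;> simp [h₁, Matrix.neg_mul, sub_eq_neg_add]

lemma mul_eq_mul_fromBlocks_of_mul_eq_zero {α : Type*} [Ring α] {l u a b c d s r : Type*}
    [Fintype u] [Fintype a] [Fintype b] [Fintype c] [Fintype d] [Fintype s] [Fintype r]
    [DecidableEq b] {P : Matrix l u α} {U : Matrix u (a ⊕ c) α} {S₁ : Matrix a b α}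
    {S₂ : Matrix c d α} {W₁ : Matrix b s α} {W₂ : Matrix d s α} {A : Matrix u s α}
    {Ω : Matrix s r α} {Ωp : Matrix r b α} (hP : P * (A * Ω) = 0)
    (hA : A = U * fromBlocks S₁ 0 0 S₂ * fromRows W₁ W₂) (h : W₁ * Ω * Ωp = 1) :
    P * A =
      P * U * fromBlocks (0 : Matrix a b α) 0 (-(S₂ * (W₂ * Ω) * Ωp)) S₂ * fromRows W₁ W₂ := by
  have hres : A - A * Ω * (Ωp * W₁)
      = U * (fromBlocks (0 : Matrix a b α) 0 (-(S₂ * (W₂ * Ω) * Ωp)) S₂ * fromRows W₁ W₂) := by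
    rw [hA, ← fromBlocks_mul_fromRows_sub S₁ S₂ W₁ W₂ Ω Ωp h]
    simp only [Matrix.mul_assoc, Matrix.mul_sub]
  calc P * A = P * (A - A * Ω * (Ωp * W₁)) := by
        rw [Matrix.mul_sub, ← Matrix.mul_assoc P, hP, Matrix.zero_mul, sub_zero]
    _ = _ := by rw [hres]; simp only [Matrix.mul_assoc]

theorem stmt12_general {k m' n' r : ℕ}
    (U : Matrix (Fin k ⊕ Fin m') (Fin k ⊕ Fin m') ℝ)
    (V : Matrix (Fin k ⊕ Fin n') (Fin k ⊕ Fin n') ℝ)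
    (hU : Uᵀ * U = 1)
    (hV' : V * Vᵀ = 1)
    (S1 : Matrix (Fin k) (Fin k) ℝ) (S2 : Matrix (Fin m') (Fin n') ℝ)
    (A : Matrix (Fin k ⊕ Fin m') (Fin k ⊕ Fin n') ℝ)
    (hA : A = U * Matrix.fromBlocks S1 0 0 S2 * Vᵀ)
    (Ω : Matrix (Fin k ⊕ Fin n') (Fin r) ℝ)
    (Ω1p : Matrix (Fin r) (Fin k) ℝ)
    (hfull : ((V.submatrix id Sum.inl)ᵀ * Ω) * Ω1p = 1)
    (Gp : Matrix (Fin r) (Fin r) ℝ)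
    (hGp : IsMoorePenrose ((A * Ω)ᵀ * (A * Ω)) Gp) :
    frobNorm (A - A * Ω * Gp * (A * Ω)ᵀ * A) ^ 2 ≤
        frobNorm S2 ^ 2 +
          frobNorm (S2 * ((V.submatrix id Sum.inr)ᵀ * Ω) * Ω1p) ^ 2 ∧
      specNorm (A - A * Ω * Gp * (A * Ω)ᵀ * A) ^ 2 ≤
        specNorm S2 ^ 2 +
          specNorm (S2 * ((V.submatrix id Sum.inr)ᵀ * Ω) * Ω1p) ^ 2 := by
  set R := 1 - A * Ω * Gp * (A * Ω)ᵀ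
  set F := S2 * ((V.submatrix id Sum.inr)ᵀ * Ω) * Ω1p
  set B := Matrix.fromBlocks (0 : Matrix (Fin k) (Fin k) ℝ) 0 (-F) S2 with hB
  have hVrows : fromRows (V.submatrix id Sum.inl)ᵀ (V.submatrix id Sum.inr)ᵀ = Vᵀ :=
    fromRows_toRows Vᵀ
  have hE : A - A * Ω * Gp * (A * Ω)ᵀ * A = R * U * B * Vᵀ := by
    rw [← hVrows] at hA ⊢
    rw [← mul_eq_mul_fromBlocks_of_mul_eq_zero hGp.one_sub_gramProj_mul hA hfull, Matrix.sub_mul,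
      Matrix.one_mul]
  have hRU : specNorm (R * U) ≤ 1 :=
    (specNorm_mul_le _ _).trans <| mul_le_one₀ hGp.specNorm_one_sub_gramProj_le (specNorm_nonneg U)
      (specNorm_le_one_of_transpose_mul_self_eq_one hU)
  have hVt : specNorm Vᵀ ≤ 1 :=
    specNorm_le_one_of_transpose_mul_self_eq_one (by rwa [transpose_transpose])
  rw [hE]
  constructor
  · calc _ ≤ frobNorm B ^ 2 :=
          pow_le_pow_left₀ (frobNorm_nonneg _) (frobNorm_mul_mul_le_of_le_one hRU hVt B) 2
      _ = _ := by rw [hB, frobNorm_fromBlocks_zero_zero_sq, frobNorm_neg, add_comm]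
  · calc _ ≤ specNorm B ^ 2 :=
          pow_le_pow_left₀ (specNorm_nonneg _) (specNorm_mul_mul_le_of_le_one hRU hVt B) 2
      _ ≤ _ := by
          simpa only [specNorm_neg, add_comm] using specNorm_fromBlocks_zero_zero_sq_le (-F) S2

/-- Deterministic error bound (Halko–Martinsson–Tropp): with
A = U · diag(Σ₁, Σ₂) · Vᵀ, Ω₁ = V₁ᵀΩ of full row rank, the projection error
satisfies ‖(I − P_{AΩ})A‖² ≤ ‖Σ₂‖² + ‖Σ₂Ω₂Ω₁⁺‖² in the Frobenius norm and in
the spectral norm. -/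
theorem stmt12 {k m' n' r : ℕ}
    (U : Matrix (Fin k ⊕ Fin m') (Fin k ⊕ Fin m') ℝ)
    (V : Matrix (Fin k ⊕ Fin n') (Fin k ⊕ Fin n') ℝ)
    (hU : Uᵀ * U = 1) (hU' : U * Uᵀ = 1)
    (hV : Vᵀ * V = 1) (hV' : V * Vᵀ = 1)
    (S1 : Matrix (Fin k) (Fin k) ℝ) (S2 : Matrix (Fin m') (Fin n') ℝ)
    (A : Matrix (Fin k ⊕ Fin m') (Fin k ⊕ Fin n') ℝ)
    (hA : A = U * Matrix.fromBlocks S1 0 0 S2 * Vᵀ)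
    (Ω : Matrix (Fin k ⊕ Fin n') (Fin r) ℝ)
    (Ω1p : Matrix (Fin r) (Fin k) ℝ)
    (hΩ1p : IsMoorePenrose ((V.submatrix id Sum.inl)ᵀ * Ω) Ω1p)
    (hfull : ((V.submatrix id Sum.inl)ᵀ * Ω) * Ω1p = 1)
    (Gp : Matrix (Fin r) (Fin r) ℝ)
    (hGp : IsMoorePenrose ((A * Ω)ᵀ * (A * Ω)) Gp) :
    frobNorm (A - A * Ω * Gp * (A * Ω)ᵀ * A) ^ 2 ≤
        frobNorm S2 ^ 2 +
          frobNorm (S2 * ((V.submatrix id Sum.inr)ᵀ * Ω) * Ω1p) ^ 2 ∧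
      specNorm (A - A * Ω * Gp * (A * Ω)ᵀ * A) ^ 2 ≤
        specNorm S2 ^ 2 +
          specNorm (S2 * ((V.submatrix id Sum.inr)ᵀ * Ω) * Ω1p) ^ 2 :=
  stmt12_general U V hU hV' S1 S2 A hA Ω Ω1p hfull Gp hGp
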